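/- arXiv:1905.00872 — 4 statements merged into one kernel-verified Lean document; each statement's English description precedes it below -/
import Mathlib

section
/- Let p be a prime and let A be a finite abelian p-group equipped with an action of a finite group H by group automorphisms, where p does not divide |H|. Then A decomposes as an internal direct sum A = A_1 ⊕ ⋯ ⊕ A_m of H-invariant subgroups such that each A_i is homocyclic, i.e., each A_i is isomorphic as an abstract abelian group to (ℤ/p^{e_i}ℤ)^{n_i} for some e_i ≥ 1 and n_i ≥ 1 (equivalently, A splits H-equivariantly into components with constant elementary divisors). -/
/-!
Let `p ^ (e + 1)` kill `A`. Splitting `A ≅ (ℤ/p^(e+1))^n × K` with `p ^ e • K = 0`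
non-equivariantly, the projection `π₀` onto the first factor is the identity modulo
`p ^ e`-torsion and maps the `p`-torsion into `p ^ e • A`. These two properties survive conjugation
by the action, composition, and averaging over `H` (possible as `|H|` is invertible modulo `p`), so
some power `ε` of the average of `π₀` is an `H`-equivariant idempotent with them. Then
`A = range ε ⊕ ker ε` with both summands invariant, `p ^ e` kills `ker ε`, and `range ε` is
homocyclic of exponent `p ^ (e + 1)` because its `p`-torsion is `p ^ e`-divisible. Induct on `e`.
-/

lemma exists_isIdempotentElem_pow {M : Type*} [Monoid M] [Finite M] (a : M) :
    ∃ k ≠ 0, IsIdempotentElem (a ^ k) := by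
  obtain ⟨i, j, hij, h⟩ := Finite.exists_ne_map_eq_of_infinite (fun n : ℕ => a ^ n)
  obtain ⟨m, d, hd, hmd⟩ : ∃ m d : ℕ, d ≠ 0 ∧ a ^ (m + d) = a ^ m := by
    rcases Nat.lt_or_gt_of_ne hij with hlt | hlt
    · exact ⟨i, j - i, by omega, by rw [Nat.add_sub_cancel' hlt.le]; exact h.symm⟩
    · exact ⟨j, i - j, by omega, by rw [Nat.add_sub_cancel' hlt.le]; exact h⟩
  have hperiod : ∀ q, a ^ (m + q * d) = a ^ m := by
    intro q
    induction q with
    | zero => simp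
    | succ q ih => rw [add_mul, one_mul, ← add_assoc, pow_add, ih, ← pow_add, hmd]
  refine ⟨(m + 1) * d, by positivity, ?_⟩
  obtain ⟨r, hr⟩ := Nat.exists_eq_add_of_le (show m ≤ (m + 1) * d by
    nlinarith [Nat.one_le_iff_ne_zero.mpr hd])
  have hexp : (m + 1) * d + (m + 1) * d = m + (m + 1) * d + r := by rw [hr]; ring
  rw [IsIdempotentElem, ← pow_add, hexp, pow_add, hperiod, ← pow_add, hr]

lemma eq_zero_of_pow_nsmul_eq_zero {G : Type*} [AddCommGroup G] {p : ℕ}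
    (h : ∀ x : G, p • x = 0 → x = 0) {x : G} : ∀ {j : ℕ}, p ^ j • x = 0 → x = 0
  | 0, hx => by simpa using hx
  | j + 1, hx => eq_zero_of_pow_nsmul_eq_zero h (h _ (by rwa [← mul_nsmul', ← pow_succ']))

lemma exists_forall_pow_nsmul_eq_zero {G : Type*} [AddCommGroup G] [Finite G] {p : ℕ}
    (hG : ∀ x : G, ∃ m : ℕ, (p : ℤ) ^ m • x = 0) : ∃ E : ℕ, ∀ x : G, p ^ E • x = 0 := by
  choose m hm using hG
  obtain ⟨E, hE⟩ := (Set.finite_range m).bddAbove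
  refine ⟨E, fun x => ?_⟩
  obtain ⟨k, hk⟩ := Nat.exists_eq_add_of_le (hE ⟨x, rfl⟩)
  have hx : p ^ m x • x = 0 := by exact_mod_cast hm x
  rw [hk, pow_add, mul_nsmul, hx, smul_zero]

lemma exists_int_mul_zsmul_eq_self {G : Type*} [AddCommGroup G] {p N E : ℕ} (hp : p.Prime)
    (hN : ¬ p ∣ N) (hG : ∀ x : G, p ^ E • x = 0) : ∃ u : ℤ, ∀ x : G, (u * N) • x = x := by
  obtain ⟨u, v, huv⟩ : IsCoprime (N : ℤ) ((p ^ E : ℕ) : ℤ) :=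
    Nat.isCoprime_iff_coprime.mpr (Nat.Coprime.pow_right E (hp.coprime_iff_not_dvd.mpr hN).symm)
  refine ⟨u, fun x => ?_⟩
  rw [eq_sub_of_add_eq huv, sub_smul, one_smul, mul_smul, natCast_zsmul, hG, smul_zero, sub_zero]

lemma ZMod.exists_pow_nsmul_eq_of_nsmul_eq_zero {p : ℕ} (hp : p.Prime) {e : ℕ}
    {x : ZMod (p ^ (e + 1))} (hx : p • x = 0) : ∃ y : ZMod (p ^ (e + 1)), p ^ e • y = x := by
  have : NeZero (p ^ (e + 1)) := ⟨pow_ne_zero _ hp.ne_zero⟩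
  rw [← ZMod.natCast_zmod_val x, nsmul_eq_mul, ← Nat.cast_mul, ZMod.natCast_eq_zero_iff] at hx
  obtain ⟨t, ht⟩ : p ^ e ∣ x.val := (Nat.mul_dvd_mul_iff_left hp.pos).mp (by rwa [← pow_succ'])
  exact ⟨t, by rw [nsmul_eq_mul, ← Nat.cast_mul, ← ht, ZMod.natCast_zmod_val]⟩

section TopProjection

variable {A A' : Type*} [AddCommGroup A] [AddCommGroup A'] {p e : ℕ}

/-- Relative to the exponent `p ^ (e + 1)`: `π` is the identity modulo `p ^ e`-torsion and
maps the `p`-torsion into `p ^ e • A`. -/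
structure IsTopProjection (p e : ℕ) (π : Module.End ℤ A) : Prop where
  pow_nsmul_apply (a : A) : p ^ e • π a = p ^ e • a
  exists_eq_pow_nsmul (a : A) : p • a = 0 → ∃ c, π a = p ^ e • c

namespace IsTopProjection

variable {π π' : Module.End ℤ A}

lemma mul (h : IsTopProjection p e π) (h' : IsTopProjection p e π') :
    IsTopProjection p e (π * π') where
  pow_nsmul_apply a := by rw [Module.End.mul_apply, h.pow_nsmul_apply, h'.pow_nsmul_apply]
  exists_eq_pow_nsmul a ha := by
    obtain ⟨c, hc⟩ := h'.exists_eq_pow_nsmul a ha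
    exact ⟨π c, by rw [Module.End.mul_apply, hc, map_nsmul]⟩

lemma pow (h : IsTopProjection p e π) : ∀ {k : ℕ}, k ≠ 0 → IsTopProjection p e (π ^ k)
  | 1, _ => by rwa [pow_one]
  | k + 2, _ => by rw [pow_succ]; exact (h.pow k.succ_ne_zero).mul h

lemma comp_comp (h : IsTopProjection p e π) {f : A →ₗ[ℤ] A'} {g : A' →ₗ[ℤ] A}
    (hfg : ∀ a, f (g a) = a) : IsTopProjection p e (f ∘ₗ π ∘ₗ g) where
  pow_nsmul_apply a := by
    simp only [LinearMap.comp_apply]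
    rw [← map_nsmul, h.pow_nsmul_apply, map_nsmul, hfg]
  exists_eq_pow_nsmul a ha := by
    obtain ⟨c, hc⟩ := h.exists_eq_pow_nsmul (g a) (by rw [← map_nsmul, ha, map_zero])
    exact ⟨f c, by simp only [LinearMap.comp_apply, hc, map_nsmul]⟩

lemma smul_sum {ι : Type*} [Fintype ι] {π : ι → Module.End ℤ A}
    (h : ∀ i, IsTopProjection p e (π i)) {u : ℤ} (hu : ∀ a : A, (u * Fintype.card ι) • a = a) :
    IsTopProjection p e (u • ∑ i, π i) where
  pow_nsmul_apply a := by
    rw [LinearMap.smul_apply, LinearMap.sum_apply, smul_comm, Finset.smul_sum]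
    simp only [(h _).pow_nsmul_apply]
    rw [Finset.sum_const, Finset.card_univ, ← natCast_zsmul, smul_smul, hu]
  exists_eq_pow_nsmul a ha := by
    choose c hc using fun i => (h i).exists_eq_pow_nsmul a ha
    refine ⟨u • ∑ i, c i, ?_⟩
    simp only [LinearMap.smul_apply, LinearMap.sum_apply, hc, ← Finset.smul_sum]
    exact smul_comm _ _ _

lemma pow_nsmul_eq_zero_of_mem_ker (h : IsTopProjection p e π) {a : A}
    (ha : a ∈ LinearMap.ker π) : p ^ e • a = 0 := by
  rw [← h.pow_nsmul_apply, LinearMap.mem_ker.mp ha, smul_zero]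

lemma exists_mem_range_pow_nsmul_eq (h : IsTopProjection p e π) (hidem : IsIdempotentElem π)
    {b : A} (hb : b ∈ LinearMap.range π) (hpb : p • b = 0) :
    ∃ c ∈ LinearMap.range π, p ^ e • c = b := by
  have hfix : π b = b := (LinearMap.IsIdempotentElem.mem_range_iff hidem).mp hb
  obtain ⟨c, hc⟩ := h.exists_eq_pow_nsmul b hpb
  exact ⟨π c, LinearMap.mem_range_self π c, by rw [← map_nsmul, ← hc, hfix, hfix]⟩

end IsTopProjection

lemma isTopProjection_inl_comp_fst {F K : Type*} [AddCommGroup F] [AddCommGroup K]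
    (hF : ∀ x : F, p • x = 0 → ∃ y, p ^ e • y = x) (hK : ∀ k : K, p ^ e • k = 0) :
    IsTopProjection p e (LinearMap.inl ℤ F K ∘ₗ LinearMap.fst ℤ F K) where
  pow_nsmul_apply x := Prod.ext rfl (by simp [hK])
  exists_eq_pow_nsmul x hx := by
    obtain ⟨y, hy⟩ := hF x.1 (congrArg Prod.fst hx)
    exact ⟨(y, 0), by simp [hy]⟩

end TopProjection

section Classification

variable {p e : ℕ}

theorem exists_addEquiv_pi_zmod_prod {G : Type*} [AddCommGroup G] [Finite G] (hp : p.Prime)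
    (hG : ∀ x : G, p ^ (e + 1) • x = 0) :
    ∃ (n : ℕ) (K : Type) (_ : AddCommGroup K), (∀ k : K, p ^ e • k = 0) ∧
      Nonempty (G ≃+ (Fin n → ZMod (p ^ (e + 1))) × K) := by
  classical
  obtain ⟨ι, _, m, -, ⟨φ⟩⟩ := AddCommGroup.equiv_directSum_zmod_of_finite' G
  let ψ : G ≃+ ∀ i, ZMod (m i) := φ.trans (DirectSum.linearEquivFunOnFintype ℤ ι _).toAddEquiv
  have hdvd : ∀ i, m i ∣ p ^ (e + 1) := by
    intro i
    rw [← ZMod.addOrderOf_one (m i)]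
    apply addOrderOf_dvd_of_nsmul_eq_zero
    have := congrArg ψ (hG (ψ.symm (Pi.single i 1)))
    rw [map_nsmul, ψ.apply_symm_apply, map_zero] at this
    simpa using congrFun this i
  let isTop := fun i => m i = p ^ (e + 1)
  have hlow : ∀ i, m i ≠ p ^ (e + 1) → m i ∣ p ^ e := by
    intro i hi
    obtain ⟨f, hf, hmf⟩ := (Nat.dvd_prime_pow hp).mp (hdvd i)
    have hfe : f ≠ e + 1 := by rintro rfl; exact hi hmf
    exact hmf ▸ pow_dvd_pow p (by omega)
  refine ⟨Fintype.card {i // isTop i}, ∀ i : {i // ¬ isTop i}, ZMod (m i), inferInstance,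
    fun k => funext fun i => ?_, ⟨ψ.trans <|
      (RingEquiv.piEquivPiSubtypeProd isTop _).toAddEquiv.trans (.prodCongr ?_ (.refl _))⟩⟩
  · rw [Pi.smul_apply, nsmul_eq_mul, (ZMod.natCast_eq_zero_iff _ _).mpr (hlow i i.2), zero_mul,
      Pi.zero_apply]
  · exact (AddEquiv.piCongrRight fun i => (ZMod.ringEquivCongr i.2).toAddEquiv).trans
      (LinearEquiv.funCongrLeft ℤ _ (Fintype.equivFin _).symm).toAddEquiv

theorem exists_isTopProjection {G : Type*} [AddCommGroup G] [Finite G] (hp : p.Prime)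
    (hG : ∀ x : G, p ^ (e + 1) • x = 0) : ∃ π : Module.End ℤ G, IsTopProjection p e π := by
  obtain ⟨n, K, _, hK, ⟨φ⟩⟩ := exists_addEquiv_pi_zmod_prod hp hG
  have hF : ∀ x : Fin n → ZMod (p ^ (e + 1)), p • x = 0 → ∃ y, p ^ e • y = x := by
    intro x hx
    choose y hy using fun i => ZMod.exists_pow_nsmul_eq_of_nsmul_eq_zero hp (congrFun hx i)
    exact ⟨y, funext hy⟩
  exact ⟨_, (isTopProjection_inl_comp_fst hF hK).comp_comp
    (f := φ.symm.toIntLinearEquiv.toLinearMap) (g := φ.toIntLinearEquiv.toLinearMap)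
    φ.symm_apply_apply⟩

theorem exists_addEquiv_pi_zmod_of_forall_exists_pow_nsmul_eq {G : Type*} [AddCommGroup G]
    [Finite G] (hp : p.Prime) (hG : ∀ x : G, p ^ (e + 1) • x = 0)
    (hsocle : ∀ x : G, p • x = 0 → ∃ y, p ^ e • y = x) :
    ∃ n : ℕ, Nonempty (G ≃+ (Fin n → ZMod (p ^ (e + 1)))) := by
  obtain ⟨n, K, _, hK, ⟨φ⟩⟩ := exists_addEquiv_pi_zmod_prod hp hG
  have hsocleK : ∀ k : K, p • k = 0 → k = 0 := by
    intro k hk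
    obtain ⟨y, hy⟩ := hsocle (φ.symm (0, k)) (by rw [← map_nsmul, Prod.smul_mk, smul_zero, hk,
      Prod.mk_zero_zero, map_zero])
    simpa [hK] using (congrArg (fun x => (φ x).2) hy).symm
  have : Unique K := ⟨⟨0⟩, fun k => eq_zero_of_pow_nsmul_eq_zero hsocleK (hK k)⟩
  exact ⟨n, ⟨φ.trans AddEquiv.prodUnique⟩⟩

end Classification

def IsHomocyclic (p : ℕ) (G : Type*) [AddCommGroup G] : Prop :=
  ∃ e n : ℕ, 1 ≤ e ∧ 1 ≤ n ∧ Nonempty (G ≃+ (Fin n → ZMod (p ^ e)))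

def Representation.ofAddAut {H A : Type*} [Monoid H] [AddCommGroup A]
    (σ : H →* Multiplicative (AddAut A)) : Representation ℤ H A where
  toFun g := (Multiplicative.toAdd (σ g)).toIntLinearEquiv.toLinearMap
  map_one' := by ext; simp
  map_mul' g h := by ext; simp

lemma Representation.commute_sum_mul_mul_inv {k G V : Type*} [CommSemiring k] [Group G]
    [Fintype G] [AddCommMonoid V] [Module k V] (ρ : Representation k G V) (π : Module.End k V)
    (h : G) : Commute (ρ h) (∑ g, ρ g * π * ρ g⁻¹) := by
  simp only [Commute, SemiconjBy, Finset.mul_sum, Finset.sum_mul]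
  refine Fintype.sum_equiv (Equiv.mulLeft h) _ _ fun g => ?_
  simp only [Equiv.coe_mulLeft, mul_inv_rev, map_mul, mul_assoc]
  rw [← map_mul ρ h⁻¹ h, inv_mul_cancel, map_one, mul_one]

namespace Representation

variable {H A : Type*} [Group H] [Finite H] [AddCommGroup A] [Finite A] (ρ : Representation ℤ H A)
  {p e : ℕ}

theorem exists_isIdempotentElem_isTopProjection_commute (hp : p.Prime) (hH : ¬ p ∣ Nat.card H)
    (hA : ∀ a : A, p ^ (e + 1) • a = 0) {π₀ : Module.End ℤ A} (hπ₀ : IsTopProjection p e π₀) :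
    ∃ ε : Module.End ℤ A, IsIdempotentElem ε ∧ IsTopProjection p e ε ∧ ∀ g, Commute (ρ g) ε := by
  have := Fintype.ofFinite H
  obtain ⟨u, hu⟩ := exists_int_mul_zsmul_eq_self hp hH hA
  have hπ : IsTopProjection p e (u • ∑ g, ρ g * π₀ * ρ g⁻¹) :=
    IsTopProjection.smul_sum (fun g => hπ₀.comp_comp (ρ.self_inv_apply g))
      (by simpa [Nat.card_eq_fintype_card] using hu)
  have : Finite (Module.End ℤ A) := Finite.of_injective _ DFunLike.coe_injective
  obtain ⟨k, hk, hidem⟩ := exists_isIdempotentElem_pow (u • ∑ g, ρ g * π₀ * ρ g⁻¹)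
  exact ⟨_, hidem, hπ.pow hk, fun g => ((ρ.commute_sum_mul_mul_inv π₀ g).smul_right u).pow_right k⟩

theorem exists_isCompl_invtSubmodule (hp : p.Prime) (hH : ¬ p ∣ Nat.card H)
    (hA : ∀ a : A, p ^ (e + 1) • a = 0) :
    ∃ B ∈ ρ.invtSubmodule, ∃ K ∈ ρ.invtSubmodule, IsCompl B K ∧ (∀ a ∈ K, p ^ e • a = 0) ∧
      ∃ n, Nonempty (B ≃+ (Fin n → ZMod (p ^ (e + 1)))) := by
  obtain ⟨π₀, hπ₀⟩ := exists_isTopProjection hp hA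
  obtain ⟨ε, hidem, hε, hcomm⟩ := ρ.exists_isIdempotentElem_isTopProjection_commute hp hH hA hπ₀
  have hinv := fun g => (LinearMap.IsIdempotentElem.commute_iff hidem).mp (hcomm g).symm
  refine ⟨_, ρ.mem_invtSubmodule.mpr fun g => (hinv g).1, _, ρ.mem_invtSubmodule.mpr fun g =>
    (hinv g).2, LinearMap.IsIdempotentElem.isCompl hidem, fun a => hε.pow_nsmul_eq_zero_of_mem_ker,
    exists_addEquiv_pi_zmod_of_forall_exists_pow_nsmul_eq hp (fun b => Subtype.ext (hA b))
      fun b hb => ?_⟩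
  obtain ⟨c, hc, hcb⟩ := hε.exists_mem_range_pow_nsmul_eq hidem b.2 (congrArg Subtype.val hb)
  exact ⟨⟨c, hc⟩, Subtype.ext hcb⟩

theorem exists_disjoint_sup_eq (hp : p.Prime) (hH : ¬ p ∣ Nat.card H) {N : Submodule ℤ A}
    (hN : N ∈ ρ.invtSubmodule) (hNe : ∀ a ∈ N, p ^ (e + 1) • a = 0) :
    ∃ B ∈ ρ.invtSubmodule, ∃ K ∈ ρ.invtSubmodule, Disjoint B K ∧ B ⊔ K = N ∧
      (∀ a ∈ K, p ^ e • a = 0) ∧ ∃ n, Nonempty (B ≃+ (Fin n → ZMod (p ^ (e + 1)))) := by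
  have hN' := ρ.mem_invtSubmodule.mp hN
  obtain ⟨B, hB, K, hK, hBK, hKe, n, ⟨φ⟩⟩ :=
    (ρ.subrepresentation N hN').exists_isCompl_invtSubmodule hp hH fun a => Subtype.ext (hNe a a.2)
  refine ⟨B.map N.subtype, ρ.mem_invtSubmodule.mpr fun g => ?_, K.map N.subtype,
    ρ.mem_invtSubmodule.mpr fun g => ?_, Submodule.disjoint_map N.injective_subtype hBK.disjoint,
    by rw [← Submodule.map_sup, hBK.sup_eq_top, Submodule.map_top, Submodule.range_subtype], ?_,
    n, ⟨(Submodule.equivMapOfInjective _ N.injective_subtype B).symm.toAddEquiv.trans φ⟩⟩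
  · exact Module.End.invtSubmodule.map_subtype_mem_of_mem_invtSubmodule _ (hN' g)
      ((ρ.subrepresentation N hN').mem_invtSubmodule.mp hB g)
  · exact Module.End.invtSubmodule.map_subtype_mem_of_mem_invtSubmodule _ (hN' g)
      ((ρ.subrepresentation N hN').mem_invtSubmodule.mp hK g)
  · rintro _ ⟨k, hk, rfl⟩
    exact congrArg Subtype.val (hKe k hk)

theorem exists_finset_isHomocyclic (hp : p.Prime) (hH : ¬ p ∣ Nat.card H) (E : ℕ)
    {N : Submodule ℤ A} (hN : N ∈ ρ.invtSubmodule) (hNE : ∀ a ∈ N, p ^ E • a = 0) :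
    ∃ S : Finset (Submodule ℤ A), (∀ B ∈ S, B ∈ ρ.invtSubmodule ∧ IsHomocyclic p B) ∧
      S.SupIndep id ∧ S.sup id = N := by
  classical
  induction E generalizing N with
  | zero =>
    refine ⟨∅, by simp, Finset.supIndep_empty _, (eq_bot_iff.mpr fun a ha => ?_).symm⟩
    simpa using hNE a ha
  | succ E ih =>
    obtain ⟨B, hB, K, hK, hBK, hBKN, hKE, n, ⟨φ⟩⟩ := ρ.exists_disjoint_sup_eq hp hH hN hNE
    obtain ⟨S, hS, hSindep, hSsup⟩ := ih hK hKE
    rcases Nat.eq_zero_or_pos n with rfl | hn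
    · have : Subsingleton B := φ.toEquiv.subsingleton
      have hB0 : B = ⊥ := Submodule.eq_bot_of_subsingleton
      rw [hB0, bot_sup_eq] at hBKN
      exact ⟨S, hS, hSindep, hSsup.trans hBKN⟩
    refine ⟨insert B S, (Finset.forall_mem_insert _ _ _).mpr ⟨⟨hB, E + 1, n, by omega, hn, ⟨φ⟩⟩,
      hS⟩, hSindep.insert (by rwa [hSsup]), by rw [Finset.sup_insert, hSsup, id, hBKN]⟩

end Representation

theorem Finset.SupIndep.isInternal_equivFin {R M : Type*} [Ring R] [AddCommGroup M] [Module R M]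
    {S : Finset (Submodule R M)} (hS : S.SupIndep id) (htop : S.sup id = ⊤) :
    DirectSum.IsInternal fun i : Fin S.card => (S.equivFin.symm i : Submodule R M) := by
  refine DirectSum.isInternal_submodule_of_iSupIndep_of_iSup_eq_top
    (hS.independent.comp S.equivFin.symm.injective) ?_
  rw [S.equivFin.symm.iSup_comp (g := fun B : S => (B : Submodule R M)), ← htop,
    Finset.sup_eq_iSup, iSup_subtype]
  rfl

/-- **Equivariant primary splitting** (used in the proof of Remark B.6 of the paper).
Let `p` be a prime and `A` a finite abelian `p`-group with an action of a finite group `H`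
by group automorphisms, where `p ∤ |H|`.  Then `A` is the internal direct sum of finitely
many `H`-invariant subgroups, each of which is homocyclic, i.e. isomorphic as an abstract
abelian group to `(ℤ/p^eℤ)^n` with `e ≥ 1` and `n ≥ 1`. -/
theorem stmt_3 {p : ℕ} (hp : p.Prime) {A : Type*} [AddCommGroup A] [Finite A]
    (hA : ∀ a : A, ∃ m : ℕ, (p : ℤ) ^ m • a = 0)
    {H : Type*} [Group H] [Finite H] (hH : ¬ p ∣ Nat.card H)
    (σ : H →* Multiplicative (AddAut A)) :
    ∃ (m : ℕ) (B : Fin m → Submodule ℤ A),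
      (∀ (i : Fin m) (g : H), ∀ a ∈ B i, (Multiplicative.toAdd (σ g)) a ∈ B i) ∧
      DirectSum.IsInternal B ∧
      (∀ i : Fin m, ∃ (e n : ℕ), 1 ≤ e ∧ 1 ≤ n ∧
        Nonempty (↥(B i) ≃+ (Fin n → ZMod (p ^ e)))) := by
  obtain ⟨E, hE⟩ := exists_forall_pow_nsmul_eq_zero hA
  set ρ := Representation.ofAddAut σ
  obtain ⟨S, hS, hSindep, hStop⟩ := ρ.exists_finset_isHomocyclic hp hH E
    (Representation.invtSubmodule.top_mem ρ) fun a _ => hE a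
  refine ⟨S.card, fun i => S.equivFin.symm i, fun i g a ha => ?_, hSindep.isInternal_equivFin hStop,
    fun i => (hS _ (S.equivFin.symm i).2).2⟩
  exact ρ.mem_invtSubmodule.mp (hS _ (S.equivFin.symm i).2).1 g ha
end

section
/- Let A be an abelian group written additively, let ℤ[A] denote its group algebra over ℤ with canonical basis {x^α}_{α ∈ A} (so x^{α+β} = x^α·x^β and x^0 = 1), and let ε : ℤ[A] → ℤ be the augmentation homomorphism sending each x^α to 1. Then the map θ_A : A → ℤ ⊗_{ℤ[A]} Ω_{ℤ[A]/ℤ} (the base change of the module of Kähler differentials of ℤ[A] over ℤ along ε) defined by α ↦ 1 ⊗ d(x^α) is an isomorphism of abelian groups. Moreover, θ is natural in A: for every group homomorphism φ : A → B, one has θ_B ∘ φ = Θ(φ) ∘ θ_A, where Θ(φ) : ℤ ⊗_{ℤ[A]} Ω_{ℤ[A]/ℤ} → ℤ ⊗_{ℤ[B]} Ω_{ℤ[B]/ℤ} is the map induced by x^α ↦ x^{φ(α)}. -/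
open TensorProduct

noncomputable section

universe u

/-- The augmentation map `ℤ[A] → ℤ`, `x^α ↦ 1`, of the group ring of an abelian group. -/
def aug (A : Type*) [AddCommGroup A] : AddMonoidAlgebra ℤ A →ₐ[ℤ] ℤ :=
  AddMonoidAlgebra.lift ℤ ℤ A 1

/-- `ℤ` as a module over the group ring `ℤ[A]`, via the augmentation map. -/
noncomputable instance augModule (A : Type*) [AddCommGroup A] :
    Module (AddMonoidAlgebra ℤ A) ℤ :=
  Module.compHom ℤ (aug A).toRingHom

/-- The map `θ_A : A → ℤ ⊗_{ℤ[A]} Ω_{ℤ[A]/ℤ}`, `α ↦ 1 ⊗ d(x^α)`, where the base change is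
taken along the augmentation `ε : ℤ[A] → ℤ`, `x^α ↦ 1`. -/
def theta (A : Type u) [AddCommGroup A] :
    A → TensorProduct (AddMonoidAlgebra ℤ A) ℤ
          (KaehlerDifferential ℤ (AddMonoidAlgebra ℤ A)) :=
  fun α => (1 : ℤ) ⊗ₜ[AddMonoidAlgebra ℤ A]
    (KaehlerDifferential.D ℤ (AddMonoidAlgebra ℤ A) (AddMonoidAlgebra.of' ℤ A α))

/-! The assignment `x^α ↦ α` extends additively to `Σ nₐ x^a ↦ Σ nₐ a`, which is a derivation
`ℤ[A] → A` when `A` is made a `ℤ[A]`-module through `ε`. By the universal property of `Ω`, it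
induces a left inverse of `θ_A`, so `θ_A` is injective. It is surjective since
`n ⊗ d f = θ_A (n • Σ nₐ a)` for `f = Σ nₐ x^a`, and the `d f` span `Ω`. The map `Θ(φ)` is
`φ` transported along the isomorphisms `θ_A`, `θ_B`; it is induced by `x^α ↦ x^{φ(α)}` because
`Σ nₐ a` commutes with `mapDomain φ`. -/

section

open AddMonoidAlgebra

variable {A : Type u} [AddCommGroup A]

lemma aug_single (a : A) (n : ℤ) : aug A (single a n) = n := by
  simp [aug]

lemma aug_of' (a : A) : aug A (of' ℤ A a) = 1 :=
  aug_single a 1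

lemma smul_int_eq_aug_mul (r : ℤ[A]) (n : ℤ) : r • n = aug A r * n := rfl

lemma tmul_smul_eq_aug_mul_tmul (n : ℤ) (r : ℤ[A]) (ω : Ω[ℤ[A]⁄ℤ]) :
    n ⊗ₜ[ℤ[A]] (r • ω) = (aug A r * n) ⊗ₜ ω :=
  (TensorProduct.smul_tmul r n ω).symm

lemma theta_add (α β : A) : theta A (α + β) = theta A α + theta A β := by
  have hmul : of' ℤ A (α + β) = of' ℤ A α * of' ℤ A β := by simp [single_mul_single]
  rw [theta, hmul, Derivation.leibniz, TensorProduct.tmul_add, tmul_smul_eq_aug_mul_tmul,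
    tmul_smul_eq_aug_mul_tmul, aug_of', aug_of', mul_one, add_comm]
  rfl

variable (A) in
def thetaHom : A →+ ℤ ⊗[ℤ[A]] Ω[ℤ[A]⁄ℤ] :=
  AddMonoidHom.mk' (theta A) theta_add

variable (A) in
def exponentSum : ℤ[A] →ₗ[ℤ] A :=
  Finsupp.linearCombination ℤ id ∘ₗ (coeffLinearEquiv ℤ).toLinearMap

lemma exponentSum_single (a : A) (n : ℤ) : exponentSum A (single a n) = n • a := by
  simp [exponentSum]

lemma exponentSum_mul (f g : ℤ[A]) :
    exponentSum A (f * g) = aug A f • exponentSum A g + aug A g • exponentSum A f := by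
  induction f using AddMonoidAlgebra.induction_linear with
  | zero => simp
  | add f₁ f₂ h₁ h₂ => simp only [add_mul, map_add, h₁, h₂, add_smul, smul_add]; abel
  | single a m =>
    induction g using AddMonoidAlgebra.induction_linear with
    | zero => simp
    | add g₁ g₂ h₁ h₂ => simp only [mul_add, map_add, h₁, h₂, add_smul, smul_add]; abel
    | single b k =>
      simp only [single_mul_single, exponentSum_single, aug_single, smul_add, mul_smul,
        smul_comm k m, add_comm]

lemma exponentSum_mapDomain {B : Type u} [AddCommGroup B] (φ : A →+ B) (f : ℤ[A]) :
    exponentSum B (mapDomainRingHom ℤ φ f) = φ (exponentSum A f) := by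
  induction f using AddMonoidAlgebra.induction_linear with
  | zero => simp
  | add f g hf hg => simp only [map_add, hf, hg]
  | single a m => simp [exponentSum_single]

lemma theta_zsmul_exponentSum (n : ℤ) (f : ℤ[A]) :
    theta A (n • exponentSum A f) = n ⊗ₜ KaehlerDifferential.D ℤ ℤ[A] f := by
  change thetaHom A _ = _
  induction f using AddMonoidAlgebra.induction_linear with
  | zero => simp
  | add f g hf hg => simp only [map_add, smul_add, hf, hg, TensorProduct.tmul_add]
  | single a m =>
    have hsingle : single a m = m • of' ℤ A a := by simp
    rw [exponentSum_single, smul_smul, map_zsmul, hsingle, map_zsmul, TensorProduct.tmul_smul]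
    simp only [thetaHom, AddMonoidHom.mk'_apply, theta, TensorProduct.smul_tmul', smul_eq_mul,
      mul_one, mul_comm]

variable (A) in
instance augModuleSelf : Module ℤ[A] A :=
  Module.compHom A (aug A).toRingHom

lemma smul_eq_aug_smul (r : ℤ[A]) (a : A) : r • a = aug A r • a := rfl

instance : IsScalarTower ℤ ℤ[A] A :=
  ⟨fun n r a => by rw [smul_eq_aug_smul, smul_eq_aug_smul, map_zsmul, smul_assoc]⟩

variable (A) in
def exponentDerivation : Derivation ℤ ℤ[A] A :=
  Derivation.mk' (exponentSum A) exponentSum_mul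

variable (A) in
def thetaInv : ℤ ⊗[ℤ[A]] Ω[ℤ[A]⁄ℤ] →+ A :=
  TensorProduct.liftAddHom
    (zmultiplesHom _ (exponentDerivation A).liftKaehlerDifferential.toAddMonoidHom)
    fun r n ω => by simp [smul_int_eq_aug_mul, mul_smul, smul_eq_aug_smul, smul_comm n]

lemma thetaInv_tmul_D (n : ℤ) (f : ℤ[A]) :
    thetaInv A (n ⊗ₜ KaehlerDifferential.D ℤ ℤ[A] f) = n • exponentSum A f := by
  simp [thetaInv, exponentDerivation]

lemma thetaInv_theta (α : A) : thetaInv A (theta A α) = α := by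
  simp [theta, thetaInv_tmul_D, exponentSum_single]

lemma theta_injective : Function.Injective (theta A) :=
  Function.LeftInverse.injective thetaInv_theta

lemma tmul_mem_range_thetaHom (n : ℤ) (ω : Ω[ℤ[A]⁄ℤ]) : n ⊗ₜ ω ∈ (thetaHom A).range := by
  have hω : ω ∈ Submodule.span ℤ[A] (Set.range (KaehlerDifferential.D ℤ ℤ[A])) := by
    rw [KaehlerDifferential.span_range_derivation]; trivial
  induction hω using Submodule.span_induction generalizing n with
  | mem _ hf =>
    obtain ⟨f, rfl⟩ := hf
    exact ⟨n • exponentSum A f, theta_zsmul_exponentSum n f⟩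
  | zero => simp
  | add _ _ _ _ h₁ h₂ => rw [TensorProduct.tmul_add]; exact add_mem (h₁ n) (h₂ n)
  | smul r _ _ h => rw [tmul_smul_eq_aug_mul_tmul]; exact h _

lemma theta_surjective : Function.Surjective (theta A) := by
  intro z
  induction z using TensorProduct.induction_on with
  | zero => exact ⟨0, map_zero (thetaHom A)⟩
  | tmul n ω => exact tmul_mem_range_thetaHom n ω
  | add x y hx hy =>
    obtain ⟨a, rfl⟩ := hx
    obtain ⟨b, rfl⟩ := hy
    exact ⟨a + b, theta_add a b⟩

variable (A) in
def thetaEquiv : A ≃+ ℤ ⊗[ℤ[A]] Ω[ℤ[A]⁄ℤ] :=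
  AddEquiv.ofBijective (thetaHom A) ⟨theta_injective, theta_surjective⟩

lemma thetaEquiv_symm_tmul_D (n : ℤ) (f : ℤ[A]) :
    (thetaEquiv A).symm (n ⊗ₜ KaehlerDifferential.D ℤ ℤ[A] f) = n • exponentSum A f :=
  (thetaEquiv A).symm_apply_eq.mpr (theta_zsmul_exponentSum n f).symm

variable {B : Type u} [AddCommGroup B]

def tensorKaehlerMap (φ : A →+ B) : ℤ ⊗[ℤ[A]] Ω[ℤ[A]⁄ℤ] →+ ℤ ⊗[ℤ[B]] Ω[ℤ[B]⁄ℤ] :=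
  (thetaEquiv B).toAddMonoidHom.comp (φ.comp (thetaEquiv A).symm.toAddMonoidHom)

lemma tensorKaehlerMap_tmul_D (φ : A →+ B) (n : ℤ) (f : ℤ[A]) :
    tensorKaehlerMap φ (n ⊗ₜ KaehlerDifferential.D ℤ ℤ[A] f) =
      n ⊗ₜ KaehlerDifferential.D ℤ ℤ[B] (mapDomainRingHom ℤ φ f) :=
  calc tensorKaehlerMap φ (n ⊗ₜ KaehlerDifferential.D ℤ ℤ[A] f)
      = theta B (φ (n • exponentSum A f)) :=
        congrArg (fun a => theta B (φ a)) (thetaEquiv_symm_tmul_D n f)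
    _ = theta B (n • exponentSum B (mapDomainRingHom ℤ φ f)) := by
        rw [map_zsmul, exponentSum_mapDomain]
    _ = _ := theta_zsmul_exponentSum n _

lemma tensorKaehlerMap_theta (φ : A →+ B) (α : A) :
    tensorKaehlerMap φ (theta A α) = theta B (φ α) := by
  show thetaEquiv B (φ ((thetaEquiv A).symm (thetaEquiv A α))) = _
  rw [AddEquiv.symm_apply_apply]
  rfl

end

/-- **Key computation in the proof of Proposition B.2** (prop-cotang-mult-type).  For an
abelian group `A`, the map `θ_A : A → ℤ ⊗_{ℤ[A]} Ω_{ℤ[A]/ℤ}`, `α ↦ 1 ⊗ d(x^α)`, is an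
isomorphism of abelian groups, naturally in `A`: for every homomorphism `φ : A →+ B` the
map `Θ(φ)` induced by `x^α ↦ x^{φ(α)}` satisfies `Θ(φ) ∘ θ_A = θ_B ∘ φ`. -/
theorem stmt_8 (A : Type u) [AddCommGroup A] :
    (∀ α β : A, theta A (α + β) = theta A α + theta A β) ∧
    Function.Bijective (theta A) ∧
    (∀ (B : Type u) [AddCommGroup B] (φ : A →+ B),
      ∃ Θ : TensorProduct (AddMonoidAlgebra ℤ A) ℤ
              (KaehlerDifferential ℤ (AddMonoidAlgebra ℤ A)) →+
            TensorProduct (AddMonoidAlgebra ℤ B) ℤ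
              (KaehlerDifferential ℤ (AddMonoidAlgebra ℤ B)),
        -- `Θ` is induced by the ring homomorphism `ℤ[A] → ℤ[B]`, `x^α ↦ x^{φ(α)}`
        (∀ (n : ℤ) (f : AddMonoidAlgebra ℤ A),
          Θ (n ⊗ₜ[AddMonoidAlgebra ℤ A] (KaehlerDifferential.D ℤ (AddMonoidAlgebra ℤ A) f))
            = n ⊗ₜ[AddMonoidAlgebra ℤ B] (KaehlerDifferential.D ℤ (AddMonoidAlgebra ℤ B)
                (AddMonoidAlgebra.mapDomainRingHom ℤ φ f))) ∧
        -- naturality: `Θ(φ) ∘ θ_A = θ_B ∘ φ`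
        (∀ α : A, Θ (theta A α) = theta B (φ α))) :=
  ⟨theta_add, ⟨theta_injective, theta_surjective⟩,
    fun _ _ φ => ⟨tensorKaehlerMap φ, tensorKaehlerMap_tmul_D φ, tensorKaehlerMap_theta φ⟩⟩
end
end

section
/- Let G be a finite group and R a commutative ring in which |G| is invertible. Let M be an R[G]-module on which G acts trivially and let N be an R[G]-module with N^G = 0. Then every R[G]-module homomorphism M → N is zero, every R[G]-module homomorphism N → M is zero, and moreover Ext^i_{R[G]}(M, N) = 0 and Ext^i_{R[G]}(N, M) = 0 for all i ≥ 0. -/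
/-!
The averaging element `e = |G|⁻¹ ∑ g` of `R[G]` is central; it acts as the identity on modules
with trivial action and as zero on modules without invariants, and `1 - e` does the opposite.
So it suffices that a natural endomorphism `z` of the identity functor of an abelian category
which is `1` on `X` and `0` on `Y` kills `Hom(X, Y)` and `Ext^n(X, Y)`. For `Ext`, `z` acts
degreewise on a projective resolution `P` of `X` by a chain map lifting `z_X = 1`, hence
homotopic to the identity, while `Hom(z_P, Y) = Hom(P, z_Y) = 0`; so the identity of the
cohomology of `Hom(P, Y)` is zero.
-/

open CategoryTheory Limits Opposite

namespace CategoryTheory.CatCenter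

section

variable {C : Type*} [Category* C] [HasZeroMorphisms C]

lemma eq_zero_of_app_eq_id_of_app_eq_zero (z : CatCenter C) {X Y : C}
    (hX : z.app X = 𝟙 X) (hY : z.app Y = 0) (f : X ⟶ Y) : f = 0 := by
  rw [← Category.id_comp f, ← hX, ← z.naturality, hY, comp_zero]

variable {ι : Type*}

@[simps]
def mapHomologicalComplex (z : CatCenter C) (c : ComplexShape ι) :
    CatCenter (HomologicalComplex C c) where
  app K := { f := fun i => z.app (K.X i), comm' := fun i j _ => (z.naturality (K.d i j)).symm }
  naturality K L φ := by ext i; exact z.naturality (φ.f i)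

lemma mapHomologicalComplex_app_single [DecidableEq ι] [HasZeroObject C] (z : CatCenter C)
    (c : ComplexShape ι) (j : ι) (X : C) :
    (z.mapHomologicalComplex c).app ((HomologicalComplex.single C c j).obj X) =
      (HomologicalComplex.single C c j).map (z.app X) := by
  refine HomologicalComplex.hom_ext _ _ fun i => ?_
  by_cases h : i = j
  · subst h
    rw [HomologicalComplex.single_map_f_self, mapHomologicalComplex_app_f, z.naturality_assoc,
      Iso.hom_inv_id, Category.comp_id]
  · exact (HomologicalComplex.isZero_single_obj_X c j X i h).eq_of_src _ _

end

theorem isZero_Ext_of_app_eq_id_of_app_eq_zero {R : Type*} [Ring R] {C : Type*} [Category* C]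
    [Abelian C] [Linear R C] [EnoughProjectives C] (z : CatCenter C) {X Y : C}
    (hX : z.app X = 𝟙 X) (hY : z.app Y = 0) (n : ℕ) :
    IsZero (((Ext R C n).obj (op X)).obj Y) := by
  let P := ProjectiveResolution.of X
  let η := (z.mapHomologicalComplex _).app P.complex
  let F := ((linearYoneda R C).obj Y).rightOp
  have hη : Homotopy η (𝟙 P.complex) := by
    refine P.liftHomotopy (𝟙 X) _ _ ?_ (by simp)
    rw [← hX, ← mapHomologicalComplex_app_single]
    exact ((z.mapHomologicalComplex _).naturality P.π).symm
  have hFη : (F.mapHomologicalComplex _).map η = 0 := by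
    refine HomologicalComplex.hom_ext _ _ fun i => Quiver.Hom.unop_inj ?_
    ext (f : P.complex.X i ⟶ Y)
    change z.app _ ≫ f = 0
    rw [← z.naturality, hY, comp_zero]
  have hid : 𝟙 (((F.mapHomologicalComplex _).obj P.complex).homology n) = 0 := by
    rw [← HomologicalComplex.homologyMap_id, ← Functor.map_id,
      ← (F.mapHomotopy hη).homologyMap_eq n, hFη, HomologicalComplex.homologyMap_zero]
  exact ((IsZero.iff_id_eq_zero _).mpr hid).unop.of_iso
    (P.isoExt n Y ≪≫ HomologicalComplex.homologyUnop _ n)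

end CategoryTheory.CatCenter

namespace ModuleCat

open ModuleCat.Algebra

variable (A : Type*) [Ring A]

def toCatCenter : Subring.center A →+* CatCenter (ModuleCat A) :=
  Linear.toCatCenter (Subring.center A) (ModuleCat A)

variable {A}

lemma toCatCenter_app_hom_apply (a : Subring.center A) (X : ModuleCat A) (x : X) :
    ((toCatCenter A a).app X).hom x = (a : A) • x := rfl

end ModuleCat

namespace GroupAlgebra

open MonoidAlgebra

variable {k G : Type*} [CommSemiring k] [Group G] [Fintype G] [Invertible (Fintype.card G : k)]

variable (k G) in
theorem average_commute (a : k[G]) : Commute (average k G) a := by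
  induction a using MonoidAlgebra.induction_linear with
  | zero => exact Commute.zero_right _
  | add a b ha hb => exact ha.add_right hb
  | single g r =>
    rw [← mul_one r, ← smul_single']
    exact Commute.smul_right ((mul_average_right k G g).trans (mul_average_left k G g).symm) r

theorem of_smul_average_smul {M : Type*} [AddCommMonoid M] [Module k[G] M] (g : G) (m : M) :
    of k G g • average k G • m = average k G • m := by
  rw [← mul_smul, of_apply, mul_average_left]

theorem average_smul_of_forall_of_smul_eq {M : Type*} [AddCommMonoid M] [Module k[G] M] {m : M}
    (hm : ∀ g : G, of k G g • m = m) : average k G • m = m := by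
  rw [average, Algebra.smul_def, mul_smul, Finset.sum_smul]
  simp only [hm, Finset.sum_const, Finset.card_univ]
  rw [← Nat.cast_smul_eq_nsmul k[G], ← mul_smul, ← map_natCast (algebraMap k k[G]), ← map_mul,
    invOf_mul_self, map_one, one_smul]

theorem average_mem_center (k G : Type*) [CommRing k] [Group G] [Fintype G]
    [Invertible (Fintype.card G : k)] : average k G ∈ Subring.center k[G] :=
  Subring.mem_center_iff.2 fun a => (average_commute k G a).eq.symm

end GroupAlgebra

/-- **Orthogonality lemma, neutral affine case** (Lemma following Theorem A.2).  Let `G` be a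
finite group and `R` a commutative ring in which `|G|` is invertible.  Let `M` be an
`R[G]`-module with trivial `G`-action and `N` an `R[G]`-module with `N^G = 0`.  Then every
`R[G]`-module homomorphism `M → N` or `N → M` is zero, and `Ext^i_{R[G]}(M, N) = 0` and
`Ext^i_{R[G]}(N, M) = 0` for all `i ≥ 0`. -/
theorem stmt_11 {R : Type u} [CommRing R] {G : Type u} [Group G] [Fintype G]
    (u : R) (hu : (Fintype.card G : R) * u = 1)
    (M : Type u) [AddCommGroup M] [Module (MonoidAlgebra R G) M]
    (N : Type u) [AddCommGroup N] [Module (MonoidAlgebra R G) N]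
    (hM : ∀ (g : G) (m : M), MonoidAlgebra.of R G g • m = m)
    (hN : ∀ x : N, (∀ g : G, MonoidAlgebra.of R G g • x = x) → x = 0) :
    (∀ f : M →ₗ[MonoidAlgebra R G] N, f = 0) ∧
    (∀ f : N →ₗ[MonoidAlgebra R G] M, f = 0) ∧
    (∀ i : ℕ,
      Limits.IsZero (((Ext ℤ (ModuleCat.{u} (MonoidAlgebra R G)) i).obj
        (Opposite.op (ModuleCat.of (MonoidAlgebra R G) M))).obj
          (ModuleCat.of (MonoidAlgebra R G) N)) ∧
      Limits.IsZero (((Ext ℤ (ModuleCat.{u} (MonoidAlgebra R G)) i).obj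
        (Opposite.op (ModuleCat.of (MonoidAlgebra R G) N))).obj
          (ModuleCat.of (MonoidAlgebra R G) M))) := by
  let _ : Invertible (Fintype.card G : R) := invertibleOfRightInverse _ _ hu
  let z := ModuleCat.toCatCenter (MonoidAlgebra R G) ⟨_, GroupAlgebra.average_mem_center R G⟩
  have hzM : z.app (ModuleCat.of _ M) = 𝟙 _ := by
    ext m
    rw [ModuleCat.toCatCenter_app_hom_apply]
    exact GroupAlgebra.average_smul_of_forall_of_smul_eq (hM · m)
  have hzN : z.app (ModuleCat.of _ N) = 0 := by
    ext x
    rw [ModuleCat.toCatCenter_app_hom_apply]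
    exact hN _ fun g => GroupAlgebra.of_smul_average_smul g x
  have hzM' : (1 - z).app (ModuleCat.of _ M) = 0 := by
    rw [CatCenter.app_sub, hzM]
    exact sub_self (𝟙 _)
  have hzN' : (1 - z).app (ModuleCat.of _ N) = 𝟙 _ := by
    rw [CatCenter.app_sub, hzN, sub_zero]
    rfl
  refine ⟨fun f => ?_, fun f => ?_, fun i =>
    ⟨z.isZero_Ext_of_app_eq_id_of_app_eq_zero hzM hzN i,
      (1 - z).isZero_Ext_of_app_eq_id_of_app_eq_zero hzN' hzM' i⟩⟩
  · simpa using congrArg ModuleCat.Hom.hom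
      (z.eq_zero_of_app_eq_id_of_app_eq_zero hzM hzN (ModuleCat.ofHom f))
  · simpa using congrArg ModuleCat.Hom.hom
      ((1 - z).eq_zero_of_app_eq_id_of_app_eq_zero hzN' hzM' (ModuleCat.ofHom f))
end

section
/- Let G be a finite group and R a commutative ring in which |G| is invertible, set e = |G|^{-1} · Σ_{g ∈ G} g in R[G], and let Q = (1−e)·R[G]. Then: (1) Q is a projective R[G]-module and R[G] = e·R[G] ⊕ Q; (2) Q^G = 0; and (3) every R[G]-module N with N^G = 0 admits a surjective R[G]-module homomorphism from a direct sum of copies of Q. -/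
/-!
Left and right multiplication by any `g ∈ G` fix `∑ g`, so `e` is central and acts as the
identity on the `G`-invariants of every module; in particular `e² = e`. Hence
`R[G] = e·R[G] ⊕ (1−e)·R[G]`, and `Q = (1−e)·R[G]` is projective as a direct summand of a free
module. A `G`-invariant element of `Q` is fixed by `e`, which kills `Q`. If `N^G = 0`, then each
`e • n` is invariant, so `e` kills `N` and `1 − e ∈ Q` acts as the identity on `N`: the copies
of `Q` indexed by `n ∈ N`, each mapped by `q ↦ q • n`, cover `N`.
-/

universe u

open MonoidAlgebra GroupAlgebra

theorem Module.Projective.of_isCompl {R M : Type*} [Ring R] [AddCommGroup M] [Module R M]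
    [Module.Projective R M] {p q : Submodule R M} (h : IsCompl p q) : Module.Projective R p :=
  .of_split p.subtype (p.projectionOnto q h)
    (LinearMap.ext (Submodule.projectionOnto_apply_left h))

theorem exists_surjective_finsupp_of_smul_eq_self {A N : Type*} [Ring A] [AddCommGroup N]
    [Module A N] (I : Ideal A) {a : A} (ha : a ∈ I) (h : ∀ n : N, a • n = n) :
    ∃ f : (N →₀ I) →ₗ[A] N, Function.Surjective f :=
  ⟨Finsupp.lsum ℕ fun n => (LinearMap.toSpanSingleton A N n).comp I.subtype,
    fun n => ⟨Finsupp.single n ⟨a, ha⟩, by simp [h]⟩⟩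

section CentralIdempotent

variable {A : Type*} [Ring A] {f : A}

theorem Ideal.coe_span_singleton_eq_range_mul_left (hf : f ∈ Subring.center A) :
    (Ideal.span {f} : Set A) = Set.range (f * ·) := by
  ext x
  simp only [SetLike.mem_coe, Ideal.mem_span_singleton', Set.mem_range,
    Subring.mem_center_iff.mp hf]

theorem IsIdempotentElem.isCompl_span_singleton (hf : IsIdempotentElem f) :
    IsCompl (Ideal.span {f}) (Ideal.span {1 - f}) := by
  constructor
  · rw [Submodule.disjoint_def]
    rintro _ hx hx'
    obtain ⟨a, rfl⟩ := Ideal.mem_span_singleton'.mp hx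
    obtain ⟨b, hb⟩ := Ideal.mem_span_singleton'.mp hx'
    calc a * f = a * f * f := by rw [mul_assoc, hf.eq]
      _ = 0 := by rw [← hb, mul_assoc, hf.one_sub_mul_self, mul_zero]
  · refine codisjoint_iff.mpr <| (Ideal.eq_top_iff_one _).mpr ?_
    simpa using Submodule.add_mem_sup (Ideal.mem_span_singleton_self f)
      (Ideal.mem_span_singleton_self (1 - f))

theorem IsIdempotentElem.mul_eq_zero_of_mem_span_one_sub (hf : IsIdempotentElem f)
    (hc : f ∈ Subring.center A) {x : A} (hx : x ∈ Ideal.span {1 - f}) : f * x = 0 := by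
  obtain ⟨b, rfl⟩ := Ideal.mem_span_singleton'.mp hx
  rw [← mul_assoc, ← Subring.mem_center_iff.mp hc, mul_assoc, hf.mul_one_sub_self, mul_zero]

end CentralIdempotent

namespace GroupAlgebra

variable {R G : Type*} [CommRing R] [Group G] [Fintype G] [Invertible (Fintype.card G : R)]

theorem of_mul_average (g : G) : of R G g * average R G = average R G :=
  mul_average_left R G g

theorem average_mul_of (g : G) : average R G * of R G g = average R G :=
  mul_average_right R G g

theorem average_smul_of_forall_of_smul_eq_s12 {N : Type*} [AddCommGroup N] [Module R[G] N] {x : N}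
    (hx : ∀ g : G, of R G g • x = x) : average R G • x = x := by
  have hsum : (∑ g : G, of R G g) • x = (Fintype.card G : R[G]) • x := by
    simp only [Finset.sum_smul, hx, Finset.sum_const, Finset.card_univ, Nat.cast_smul_eq_nsmul]
  have hunit : (⅟(Fintype.card G : R) • (1 : R[G])) * (Fintype.card G : R[G]) = 1 := by
    rw [smul_one_mul, ← map_natCast (algebraMap R R[G]), Algebra.smul_def, ← map_mul,
      invOf_mul_self, map_one]
  rw [average, ← smul_one_mul (⅟(Fintype.card G : R)) (∑ g : G, of R G g), mul_smul, hsum,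
    ← mul_smul, hunit, one_smul]

theorem of_smul_average_smul_s12 {N : Type*} [AddCommGroup N] [Module R[G] N] (g : G) (n : N) :
    of R G g • average R G • n = average R G • n := by
  rw [← mul_smul, of_mul_average]

theorem isIdempotentElem_average : IsIdempotentElem (average R G) :=
  average_smul_of_forall_of_smul_eq_s12 (R := R) (G := G) (N := R[G]) of_mul_average

theorem average_mem_center_s12 : average R G ∈ Subring.center R[G] := by
  refine Subring.mem_center_iff.mpr fun x => ?_
  induction x using MonoidAlgebra.induction_on with
  | of g => rw [of_mul_average, average_mul_of]
  | add x y hx hy => rw [add_mul, mul_add, hx, hy]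
  | smul r x hx => rw [smul_mul_assoc, mul_smul_comm, hx]

end GroupAlgebra

/-- **Projective generator for purely non-trivial modules** (proof of the Lemma following
Theorem A.2).  Let `G` be a finite group and `R` a commutative ring in which `|G|` is
invertible (with inverse `u`), set `e = u • Σ_{g ∈ G} g` in `R[G]` and `Q = (1−e)·R[G]`.
Then: (1) `Q` is a projective `R[G]`-module and `R[G] = e·R[G] ⊕ Q`; (2) `Q^G = 0`; and
(3) every `R[G]`-module `N` with `N^G = 0` admits a surjection from a direct sum of copies
of `Q`. -/
theorem stmt_12 {R : Type u} [CommRing R] {G : Type u} [Group G] [Fintype G]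
    (u : R) (hu : (Fintype.card G : R) * u = 1)
    (e : MonoidAlgebra R G) (he : e = u • ∑ g : G, MonoidAlgebra.of R G g) :
    ∃ P Q : Submodule (MonoidAlgebra R G) (MonoidAlgebra R G),
      (P : Set (MonoidAlgebra R G)) = Set.range (fun x : MonoidAlgebra R G => e * x) ∧
      (Q : Set (MonoidAlgebra R G)) = Set.range (fun x : MonoidAlgebra R G => (1 - e) * x) ∧
      -- (1) `Q` is projective and `R[G] = e·R[G] ⊕ Q`
      Module.Projective (MonoidAlgebra R G) ↥Q ∧
      IsCompl P Q ∧
      -- (2) `Q^G = 0`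
      (∀ x ∈ Q, (∀ g : G, MonoidAlgebra.of R G g • x = x) → x = 0) ∧
      -- (3) every module `N` with `N^G = 0` is a quotient of a direct sum of copies of `Q`
      (∀ (N : Type u) [AddCommGroup N] [Module (MonoidAlgebra R G) N],
        (∀ x : N, (∀ g : G, MonoidAlgebra.of R G g • x = x) → x = 0) →
        ∃ (ι : Type u) (f : (ι →₀ ↥Q) →ₗ[MonoidAlgebra R G] N), Function.Surjective f) := by
  let : Invertible (Fintype.card G : R) := invertibleOfRightInverse _ u hu
  obtain rfl : e = average R G := he
  have hidem := isIdempotentElem_average (R := R) (G := G)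
  have hcompl := hidem.isCompl_span_singleton
  have hcenter : 1 - average R G ∈ Subring.center R[G] :=
    Subring.sub_mem _ (Subring.one_mem _) average_mem_center_s12
  refine ⟨_, _, Ideal.coe_span_singleton_eq_range_mul_left average_mem_center_s12,
    Ideal.coe_span_singleton_eq_range_mul_left hcenter, .of_isCompl hcompl.symm, hcompl,
    fun x hx hinv => ?_, fun N _ _ hN => ⟨N, ?_⟩⟩
  · calc x = average R G * x := (average_smul_of_forall_of_smul_eq_s12 hinv).symm
      _ = 0 := hidem.mul_eq_zero_of_mem_span_one_sub average_mem_center_s12 hx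
  · refine exists_surjective_finsupp_of_smul_eq_self _ (Ideal.mem_span_singleton_self _) fun n => ?_
    rw [sub_smul, one_smul, hN (average R G • n) (of_smul_average_smul_s12 · n), sub_zero]
end
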